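/- Let Z be a binary K×N matrix and Z' an extension of Z obtained by adding one new row containing exactly one 1. Under the IBP probability mass function P[· | α], the ratio satisfies P[Z | α] / P[Z' | α] ≤ (K+1) N / α; in particular, sup over such pairs of (1/N)·P[Z|α]/P[Z'|α] is bounded as N → ∞. -/

import Mathlib

open Finset

/-- Number of ones in row `k` of the binary matrix `Z`. -/
def rowCount {K N : ℕ} (Z : Fin K → Fin N → Bool) (k : Fin K) : ℕ :=
  (Finset.univ.filter (fun n => Z k n = true)).card

/-- The IBP exchangeable feature probability function
`P[Z | α] = (α^K e^{-α H_N} / ∏_h K_h!) · ∏_k (N−m_k)!(m_k−1)!/N!`,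
where the first product ranges over the `2^N − 1` nonzero histories `h` and `K_h` is the
number of rows of `Z` equal to `h`. -/
noncomputable def ibpEFPF {K N : ℕ} (α : ℝ) (Z : Fin K → Fin N → Bool) : ℝ :=
  (α ^ K * Real.exp (-α * ∑ n ∈ Finset.range N, (1 : ℝ) / (n + 1))
      / ∏ h ∈ (Finset.univ : Finset (Fin N → Bool)).erase (fun _ => false),
          (Nat.factorial ((Finset.univ.filter (fun k => Z k = h)).card) : ℝ))
    * ∏ k : Fin K,
        ((Nat.factorial (N - rowCount Z k) : ℝ) * (Nat.factorial (rowCount Z k - 1))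
          / Nat.factorial N)

/-! Appending a nonzero row `r` with `m` ones to `Z` changes `P[Z | α]` by three factors: `α` from
`α^K`, the new row's `(N-m)!(m-1)!/N!`, and `1/(c+1)` from the multiplicity `c` of `r` among the rows
of `Z` rising by one. For a row with a single one the ratio is therefore exactly `(c+1)N/α`, and
`c ≤ K`. -/

open scoped Nat

section Snoc

variable {β : Type*} [DecidableEq β] {K : ℕ}

theorem card_filter_snoc_eq (Z : Fin K → β) (r b : β) :
    #{k | (Fin.snoc Z r : Fin (K + 1) → β) k = b} = #{k | Z k = b} + if r = b then 1 else 0 := by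
  simp only [card_filter, Fin.sum_univ_castSucc, Fin.snoc_castSucc, Fin.snoc_last]

theorem prod_factorial_card_filter_snoc (Z : Fin K → β) {r : β} {S : Finset β} (hr : r ∈ S) :
    ∏ b ∈ S, (#{k | (Fin.snoc Z r : Fin (K + 1) → β) k = b})! =
      (∏ b ∈ S, (#{k | Z k = b})!) * (#{k | Z k = r} + 1) := by
  rw [← mul_prod_erase S _ hr, ← mul_prod_erase S (fun b => (#{k | Z k = b})!) hr,
    prod_congr rfl fun b hb => by
      rw [card_filter_snoc_eq, if_neg (ne_of_mem_erase hb).symm, add_zero],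
    card_filter_snoc_eq, if_pos rfl, Nat.factorial_succ]
  ring

end Snoc

theorem ibpEFPF_pos {K N : ℕ} {α : ℝ} (hα : 0 < α) (Z : Fin K → Fin N → Bool) :
    0 < ibpEFPF α Z := by
  unfold ibpEFPF
  positivity

theorem ibpEFPF_snoc_mul {K N : ℕ} (α : ℝ) (Z : Fin K → Fin N → Bool) {r : Fin N → Bool}
    (hr : r ≠ fun _ => false) :
    ibpEFPF α (Fin.snoc Z r) * (#{k | Z k = r} + 1) =
      ibpEFPF α Z * α *
        ((N - #{n | r n = true})! * (#{n | r n = true} - 1)! / N !) := by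
  have hmult := prod_factorial_card_filter_snoc Z (mem_erase.mpr ⟨hr, mem_univ r⟩)
  have hrow : ∀ k, rowCount (Fin.snoc Z r) k.castSucc = rowCount Z k :=
    fun k => by simp only [rowCount, Fin.snoc_castSucc]
  have hlast : rowCount (Fin.snoc Z r) (Fin.last K) =
      #{n | r n = true} := by simp only [rowCount, Fin.snoc_last]
  unfold ibpEFPF
  rw [Fin.prod_univ_castSucc, hlast]
  simp only [hrow]
  rw [← Nat.cast_inj (R := ℝ)] at hmult
  push_cast at hmult
  rw [hmult, pow_succ]
  field_simp

theorem ibpEFPF_div_snoc_single {K N : ℕ} {α : ℝ} (hα : 0 < α) (Z : Fin K → Fin N → Bool)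
    (j : Fin N) :
    ibpEFPF α Z / ibpEFPF α (Fin.snoc Z fun n => decide (n = j)) =
      (#{k | Z k = fun n => decide (n = j)} + 1) * N / α := by
  have hr : (fun n => decide (n = j)) ≠ fun _ => false := fun h => by simpa using congrFun h j
  have hone : #{n | decide (n = j) = true} = 1 := by simp [filter_eq']
  have hfact : ((N - 1)! : ℝ) * N = N ! := by
    exact_mod_cast (mul_comm _ _).trans (Nat.mul_factorial_pred j.pos.ne')
  have hsnoc : ibpEFPF α (Fin.snoc Z fun n => decide (n = j)) *
      (#{k | Z k = fun n => decide (n = j)} + 1) * N = ibpEFPF α Z * α := by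
    have hfact_ne : ((N - 1)! : ℝ) ≠ 0 := by positivity
    have hN : (N : ℝ) ≠ 0 := by exact_mod_cast j.pos.ne'
    rw [ibpEFPF_snoc_mul α Z hr, hone, Nat.sub_self, Nat.factorial_zero, Nat.cast_one, mul_one,
      ← hfact]
    field_simp
  rw [div_eq_div_iff (ibpEFPF_pos hα _).ne' hα.ne', ← hsnoc]
  ring

theorem ibp_ratio_bound_general {K N : ℕ} (α : ℝ) (hα : 0 < α)
    (Z : Fin K → Fin N → Bool)
    (Z' : Fin (K + 1) → Fin N → Bool)
    (hext : ∀ k : Fin K, Z' k.castSucc = Z k)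
    (hnew : ∃ j : Fin N, ∀ n : Fin N, Z' (Fin.last K) n = decide (n = j)) :
    ibpEFPF α Z / ibpEFPF α Z' ≤ (K + 1) * N / α ∧
    (1 / (N : ℝ)) * (ibpEFPF α Z / ibpEFPF α Z') ≤ (K + 1) / α := by
  obtain ⟨j, hj⟩ := hnew
  have hZ' : Z' = Fin.snoc Z (fun n => decide (n = j)) :=
    funext fun k => Fin.lastCases (by simpa using funext hj) (fun k => by simpa using hext k) k
  have hmult : (#{k | Z k = fun n => decide (n = j)} : ℝ) + 1 ≤ K + 1 := by
    gcongr
    exact_mod_cast (card_filter_le _ _).trans_eq (card_fin K)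
  have hNpos : (0 : ℝ) < N := by exact_mod_cast j.pos
  rw [hZ', ibpEFPF_div_snoc_single hα]
  constructor
  · gcongr
  · rw [one_div_mul_eq_div, mul_div_right_comm, mul_div_cancel_right₀ _ hNpos.ne']
    gcongr

/-- If `Z'` is obtained from `Z` by appending one new row containing exactly one `1`,
then `P[Z | α] / P[Z' | α] ≤ (K+1) N / α`; in particular `(1/N) P[Z|α]/P[Z'|α] ≤ (K+1)/α`. -/
theorem ibp_ratio_bound {K N : ℕ} (hN : 1 ≤ N) (α : ℝ) (hα : 0 < α)
    (Z : Fin K → Fin N → Bool) (hZ : ∀ k, 1 ≤ rowCount Z k)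
    (Z' : Fin (K + 1) → Fin N → Bool)
    (hext : ∀ k : Fin K, Z' k.castSucc = Z k)
    (hnew : ∃ j : Fin N, ∀ n : Fin N, Z' (Fin.last K) n = decide (n = j)) :
    ibpEFPF α Z / ibpEFPF α Z' ≤ (K + 1) * N / α ∧
    (1 / (N : ℝ)) * (ibpEFPF α Z / ibpEFPF α Z') ≤ (K + 1) / α :=
  ibp_ratio_bound_general α hα Z Z' hext hnew
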